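/- arXiv:2601.02733 — 4 statements merged into one kernel-verified Lean document; each statement's English description precedes it below -/
import Mathlib

section
/- The subspace m = span{e_1, e_2, e_3, e_4, e_5, e_6} of sl(3, ℝ) is invariant under the adjoint action Ad(h)X = h X h^{-1} for every h in the subgroup H of matrices [[e^t cos s, e^t sin s, 0], [-e^t sin s, e^t cos s, 0], [0, 0, e^{-2t}]]. -/
/-
The map `(t, s) ↦ hMat t s` is a homomorphism from `ℝ × ℝ`, so its inverses are
`(hMat t s)⁻¹ = hMat (-t) (-s)`. The span `m` is the space of matrices with vanishing `(2,2)`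
entry whose upper-left `2 × 2` block is symmetric and traceless. Conjugation by `hMat t s` fixes
the `(2,2)` entry, and on the upper-left block it is conjugation by a rotation (the factors `e^t`
cancel), which preserves both the trace and the antisymmetric part of the block.
-/

open Matrix Real

noncomputable section

abbrev M3 := Matrix (Fin 3) (Fin 3) ℝ

def e1 : M3 := !![1,0,0; 0,-1,0; 0,0,0]
def e2 : M3 := !![0,1,0; 1,0,0; 0,0,0]
def e3 : M3 := !![0,0,Real.sqrt 2; 0,0,0; 0,0,0]
def e4 : M3 := !![0,0,0; 0,0,Real.sqrt 2; 0,0,0]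
def e5 : M3 := !![0,0,0; 0,0,0; -Real.sqrt 2,0,0]
def e6 : M3 := !![0,0,0; 0,0,0; 0,-Real.sqrt 2,0]
def e7 : M3 := !![1/Real.sqrt 3,0,0; 0,1/Real.sqrt 3,0; 0,0,-2/Real.sqrt 3]
def e8 : M3 := !![0,1,0; -1,0,0; 0,0,0]

/-- element of the subgroup `H` -/
def hMat (t s : ℝ) : M3 :=
  !![Real.exp t * Real.cos s, Real.exp t * Real.sin s, 0;
     -(Real.exp t * Real.sin s), Real.exp t * Real.cos s, 0;
     0, 0, Real.exp (-2*t)]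

/-- the bilinear form `⟨X,Y⟩ = -(1/2) Tr (X Y)` -/
def ip (X Y : M3) : ℝ := -(1/2) * (X * Y).trace

/-- the subspace `m = span{e1,…,e6}` -/
def mSp : Submodule ℝ M3 := Submodule.span ℝ {e1, e2, e3, e4, e5, e6}

/-- conditions determining the almost complex structure `J` on `m` -/
def isJ (J : M3 →ₗ[ℝ] M3) : Prop :=
  J e1 = -e2 ∧ J e2 = e1 ∧ J e3 = e4 ∧ J e4 = -e3 ∧ J e5 = e6 ∧ J e6 = -e5

/-- conditions determining the complex structure `J₁` on `m` -/
def isJ1 (J1 : M3 →ₗ[ℝ] M3) : Prop :=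
  J1 e1 = e2 ∧ J1 e2 = -e1 ∧ J1 e3 = e4 ∧ J1 e4 = -e3 ∧ J1 e5 = e6 ∧ J1 e6 = -e5

/-- conditions determining the `F`-structure on `m` -/
def isF (F : M3 →ₗ[ℝ] M3) : Prop :=
  F e1 = 0 ∧ F e2 = 0 ∧ F e3 = e4 ∧ F e4 = -e3 ∧ F e5 = -e6 ∧ F e6 = e5

def symTracelessBlock : Submodule ℝ M3 where
  carrier := {X | X 2 2 = 0 ∧ X 0 0 + X 1 1 = 0 ∧ X 0 1 = X 1 0}
  add_mem' := by
    rintro X Y ⟨hX₁, hX₂, hX₃⟩ ⟨hY₁, hY₂, hY₃⟩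
    simp only [Set.mem_ofPred_eq, Matrix.add_apply]
    refine ⟨?_, ?_, ?_⟩ <;> linarith
  zero_mem' := by simp
  smul_mem' := by
    rintro c X ⟨h₁, h₂, h₃⟩
    simp only [Set.mem_ofPred_eq, Matrix.smul_apply, smul_eq_mul]
    refine ⟨?_, ?_, ?_⟩ <;> simp [h₁, h₃, ← mul_add, h₂]

lemma mSp_eq_symTracelessBlock : mSp = symTracelessBlock := by
  apply le_antisymm
  · rw [mSp, Submodule.span_le]
    rintro X (rfl | rfl | rfl | rfl | rfl | rfl) <;>
      simp [symTracelessBlock, e1, e2, e3, e4, e5, e6]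
  · rintro X ⟨h₁, h₂, h₃⟩
    have hX : X = X 0 0 • e1 + X 0 1 • e2 + (X 0 2 / √2) • e3 + (X 1 2 / √2) • e4 +
        (-X 2 0 / √2) • e5 + (-X 2 1 / √2) • e6 := by
      ext i j
      fin_cases i <;> fin_cases j <;>
        simp [e1, e2, e3, e4, e5, e6, h₁, h₃, eq_neg_of_add_eq_zero_right h₂]
    rw [hX]
    refine add_mem (add_mem (add_mem (add_mem (add_mem ?_ ?_) ?_) ?_) ?_) ?_ <;>
      exact Submodule.smul_mem _ _ (Submodule.subset_span (by simp))

lemma hMat_zero : hMat 0 0 = 1 := by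
  ext i j; fin_cases i <;> fin_cases j <;> simp [hMat]

lemma hMat_mul (t s t' s' : ℝ) : hMat t s * hMat t' s' = hMat (t + t') (s + s') := by
  ext i j
  fin_cases i <;> fin_cases j <;>
    simp [hMat, mul_apply, Fin.sum_univ_three, mul_add, exp_add, cos_add, sin_add] <;> ring

lemma hMat_inv (t s : ℝ) : (hMat t s)⁻¹ = hMat (-t) (-s) :=
  inv_eq_right_inv (by rw [hMat_mul, add_neg_cancel, add_neg_cancel, hMat_zero])

section Conjugation
variable (t s : ℝ) (X : M3)

lemma hMat_conj_apply_two_two : (hMat t s * X * hMat (-t) (-s)) 2 2 = X 2 2 := by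
  have h : exp (-(2 * t)) * exp (2 * t) = 1 := by rw [← exp_add, neg_add_cancel, exp_zero]
  simp [hMat, mul_apply, vecMul, dotProduct, Fin.sum_univ_three]
  linear_combination X 2 2 * h

lemma hMat_conj_trace_block :
    (hMat t s * X * hMat (-t) (-s)) 0 0 + (hMat t s * X * hMat (-t) (-s)) 1 1 = X 0 0 + X 1 1 := by
  have he : exp t * exp (-t) = 1 := by rw [← exp_add, add_neg_cancel, exp_zero]
  simp [hMat, mul_apply, vecMul, dotProduct, Fin.sum_univ_three]
  linear_combination (X 0 0 + X 1 1) * ((cos s ^ 2 + sin s ^ 2) * he + cos_sq_add_sin_sq s)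

lemma hMat_conj_antisymm_block :
    (hMat t s * X * hMat (-t) (-s)) 0 1 - (hMat t s * X * hMat (-t) (-s)) 1 0 = X 0 1 - X 1 0 := by
  have he : exp t * exp (-t) = 1 := by rw [← exp_add, add_neg_cancel, exp_zero]
  simp [hMat, mul_apply, vecMul, dotProduct, Fin.sum_univ_three]
  linear_combination (X 0 1 - X 1 0) * ((cos s ^ 2 + sin s ^ 2) * he + cos_sq_add_sin_sq s)

end Conjugation

theorem stmt2 : ∀ t s : ℝ, ∀ X ∈ mSp, hMat t s * X * (hMat t s)⁻¹ ∈ mSp := by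
  intro t s X hX
  rw [mSp_eq_symTracelessBlock] at hX ⊢
  obtain ⟨h₂₂, htr, hsymm⟩ := hX
  rw [hMat_inv]
  refine ⟨?_, ?_, sub_eq_zero.mp ?_⟩
  · rw [hMat_conj_apply_two_two, h₂₂]
  · rw [hMat_conj_trace_block, htr]
  · rw [hMat_conj_antisymm_block, hsymm, sub_self]
end
end

section
/- The complex structure J on m = span{e_1,…,e_6} defined by Je_1 = -e_2, Je_3 = e_4, Je_5 = e_6 (and J² = -Id) commutes with the adjoint action of H: for every h ∈ H of the form [[e^t cos s, e^t sin s, 0], [-e^t sin s, e^t cos s, 0], [0, 0, e^{-2t}]], one has J(h X h^{-1}) = h (JX) h^{-1} for all X ∈ m. -/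
open Matrix Real

noncomputable section

/-!
Conjugation by `hMat t s` maps each of the `J`-invariant planes `span {e1, e2}`, `span {e3, e4}`,
`span {e5, e6}` to itself and acts there as the "complex scalar" `a + b J`, namely
`cos 2s + sin 2s J`, `e^{3t} (cos s - sin s J)` and `e^{-3t} (cos s - sin s J)` respectively.
Such maps commute with `J`, and both sides of the claim are linear in `X`.
-/

lemma Matrix.mul_mul_nonsing_inv_eq_of_mul_eq {n R : Type*} [Fintype n] [DecidableEq n] [CommRing R]
    {A X Y : Matrix n n R} (hA : IsUnit A.det) (h : A * X = Y * A) : A * X * A⁻¹ = Y := by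
  rw [h, mul_nonsing_inv_cancel_right _ _ hA]

section conjugation

variable (t s : ℝ)

lemma det_hMat : (hMat t s).det = exp t ^ 2 * exp (-2 * t) := by
  simp only [det_fin_three, hMat, of_apply, cons_val', cons_val_zero, cons_val_one, cons_val_two,
    empty_val', cons_val_fin_one, tail_cons, vecHead]
  linear_combination exp t ^ 2 * exp (-2 * t) * sin_sq_add_cos_sq s

lemma isUnit_det_hMat : IsUnit (hMat t s).det := by
  rw [det_hMat, isUnit_iff_ne_zero]
  positivity

lemma hMat_conj_e1 : hMat t s * e1 * (hMat t s)⁻¹ = cos (2 * s) • e1 - sin (2 * s) • e2 := by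
  refine mul_mul_nonsing_inv_eq_of_mul_eq (isUnit_det_hMat t s) ?_
  ext i j
  fin_cases i <;> fin_cases j <;>
    simp [hMat, e1, e2, mul_apply, Fin.sum_univ_succ, cos_two_mul, sin_two_mul] <;>
    grind [sin_sq_add_cos_sq]

lemma hMat_conj_e2 : hMat t s * e2 * (hMat t s)⁻¹ = sin (2 * s) • e1 + cos (2 * s) • e2 := by
  refine mul_mul_nonsing_inv_eq_of_mul_eq (isUnit_det_hMat t s) ?_
  ext i j
  fin_cases i <;> fin_cases j <;>
    simp [hMat, e1, e2, mul_apply, Fin.sum_univ_succ, cos_two_mul, sin_two_mul] <;>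
    grind [sin_sq_add_cos_sq]

lemma hMat_conj_e3 :
    hMat t s * e3 * (hMat t s)⁻¹ = exp (3 * t) • (cos s • e3 - sin s • e4) := by
  have hexp : exp t = exp (3 * t) * exp (-2 * t) := by rw [← exp_add]; ring_nf
  refine mul_mul_nonsing_inv_eq_of_mul_eq (isUnit_det_hMat t s) ?_
  ext i j
  fin_cases i <;> fin_cases j <;>
    simp [hMat, e3, e4, mul_apply, Fin.sum_univ_succ] <;>
    grind [sin_sq_add_cos_sq]

lemma hMat_conj_e4 :
    hMat t s * e4 * (hMat t s)⁻¹ = exp (3 * t) • (sin s • e3 + cos s • e4) := by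
  have hexp : exp t = exp (3 * t) * exp (-2 * t) := by rw [← exp_add]; ring_nf
  refine mul_mul_nonsing_inv_eq_of_mul_eq (isUnit_det_hMat t s) ?_
  ext i j
  fin_cases i <;> fin_cases j <;>
    simp [hMat, e3, e4, mul_apply, Fin.sum_univ_succ] <;>
    grind [sin_sq_add_cos_sq]

lemma hMat_conj_e5 :
    hMat t s * e5 * (hMat t s)⁻¹ = exp (-3 * t) • (cos s • e5 - sin s • e6) := by
  have hexp : exp (-2 * t) = exp (-3 * t) * exp t := by rw [← exp_add]; ring_nf
  refine mul_mul_nonsing_inv_eq_of_mul_eq (isUnit_det_hMat t s) ?_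
  ext i j
  fin_cases i <;> fin_cases j <;>
    simp [hMat, e5, e6, mul_apply, Fin.sum_univ_succ] <;>
    grind [sin_sq_add_cos_sq]

lemma hMat_conj_e6 :
    hMat t s * e6 * (hMat t s)⁻¹ = exp (-3 * t) • (sin s • e5 + cos s • e6) := by
  have hexp : exp (-2 * t) = exp (-3 * t) * exp t := by rw [← exp_add]; ring_nf
  refine mul_mul_nonsing_inv_eq_of_mul_eq (isUnit_det_hMat t s) ?_
  ext i j
  fin_cases i <;> fin_cases j <;>
    simp [hMat, e5, e6, mul_apply, Fin.sum_univ_succ] <;>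
    grind [sin_sq_add_cos_sq]

end conjugation

theorem stmt9 (J : M3 →ₗ[ℝ] M3) (hJ : isJ J) (t s : ℝ) :
    ∀ X ∈ mSp,
      J (hMat t s * X * (hMat t s)⁻¹) = hMat t s * (J X) * (hMat t s)⁻¹ := by
  obtain ⟨h1, h2, h3, h4, h5, h6⟩ := hJ
  let Ad := LinearMap.mulLeftRight ℝ (hMat t s, (hMat t s)⁻¹)
  suffices Set.EqOn (J ∘ₗ Ad) (Ad ∘ₗ J) {e1, e2, e3, e4, e5, e6} from
    fun X hX => LinearMap.eqOn_span' this hX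
  rintro _ (rfl | rfl | rfl | rfl | rfl | rfl) <;>
    simp only [Ad, LinearMap.comp_apply, LinearMap.mulLeftRight_apply, h1, h2, h3, h4, h5, h6,
      mul_neg, neg_mul, hMat_conj_e1, hMat_conj_e2, hMat_conj_e3, hMat_conj_e4, hMat_conj_e5,
      hMat_conj_e6, map_add, map_sub, map_smul] <;>
    module
end
end

section
/- For all u ∈ ℝ and v ∈ ℝ, the matrix exponential of u(cos v · e_1 + sin v · e_2), where e_1 = diag(1,-1,0) and e_2 = E_{12}+E_{21}, equals the matrix [[cosh u + cos v sinh u, sin v sinh u, 0], [sin v sinh u, cosh u - cos v sinh u, 0], [0, 0, 1]]. -/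
open Matrix Real

noncomputable section

/-! `X = cos v • e1 + sin v • e2` satisfies `X ^ 3 = X`, since `X ^ 2` is the projection onto the
first two coordinates. Hence `(t • X) ^ n` is `t ^ n • X` for odd `n` and `t ^ n • X ^ 2` for even
`n ≠ 0`, and the exponential series splits into the series of `sinh t` and `cosh t`:
`exp (t • X) = 1 + sinh t • X + (cosh t - 1) • X ^ 2`. -/

theorem pow_two_mul_add_one_of_pow_three_eq_self {M : Type*} [Monoid M] {x : M} (hx : x ^ 3 = x)
    (k : ℕ) : x ^ (2 * k + 1) = x := by
  induction k with
  | zero => simp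
  | succ k ih => rw [show 2 * (k + 1) + 1 = 2 * k + 1 + 2 by ring, pow_add, ih, ← pow_succ', hx]

theorem pow_two_mul_of_pow_three_eq_self {M : Type*} [Monoid M] {x : M} (hx : x ^ 3 = x)
    (k : ℕ) : x ^ (2 * k) = if k = 0 then 1 else x ^ 2 := by
  rcases k with _ | k
  · simp
  · rw [if_neg k.succ_ne_zero, mul_add_one, pow_succ, pow_two_mul_add_one_of_pow_three_eq_self hx,
      ← pow_two]

theorem NormedSpace.exp_smul_of_pow_three_eq_self {𝔸 : Type*} [Ring 𝔸] [Algebra ℝ 𝔸]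
    [TopologicalSpace 𝔸] [IsTopologicalRing 𝔸] [ContinuousSMul ℝ 𝔸] [T2Space 𝔸]
    {X : 𝔸} (hX : X ^ 3 = X) (t : ℝ) :
    NormedSpace.exp (t • X) = 1 + Real.sinh t • X + (Real.cosh t - 1) • X ^ 2 := by
  rw [NormedSpace.exp_eq_tsum ℝ]
  refine HasSum.tsum_eq ?_
  rw [show 1 + Real.sinh t • X + (Real.cosh t - 1) • X ^ 2
      = (Real.cosh t • X ^ 2 + (1 - X ^ 2)) + Real.sinh t • X by rw [sub_smul, one_smul]; abel]
  refine HasSum.even_add_odd ?_ ?_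
  · convert ((Real.hasSum_cosh t).smul_const (X ^ 2)).add (hasSum_ite_eq 0 (1 - X ^ 2)) using 1
    funext k
    rw [smul_pow, pow_two_mul_of_pow_three_eq_self hX, smul_smul]
    rcases k with _ | k <;> simp [div_eq_inv_mul]
  · convert (Real.hasSum_sinh t).smul_const X using 1
    funext k
    rw [smul_pow, pow_two_mul_add_one_of_pow_three_eq_self hX, smul_smul, div_eq_inv_mul]

theorem cos_smul_e1_add_sin_smul_e2_sq (v : ℝ) :
    (cos v • e1 + sin v • e2) ^ 2 = !![1, 0, 0; 0, 1, 0; 0, 0, 0] := by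
  have h := sin_sq_add_cos_sq v
  rw [sq]
  ext i j
  fin_cases i <;> fin_cases j <;> simp [e1, e2, Matrix.mul_apply, Fin.sum_univ_three] <;> linarith

theorem cos_smul_e1_add_sin_smul_e2_pow_three (v : ℝ) :
    (cos v • e1 + sin v • e2) ^ 3 = cos v • e1 + sin v • e2 := by
  rw [pow_succ, cos_smul_e1_add_sin_smul_e2_sq]
  ext i j
  fin_cases i <;> fin_cases j <;> simp [e1, e2, Matrix.mul_apply, Fin.sum_univ_three]

theorem stmt17 (u v : ℝ) :
    NormedSpace.exp (u • (Real.cos v • e1 + Real.sin v • e2)) =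
      !![Real.cosh u + Real.cos v * Real.sinh u, Real.sin v * Real.sinh u, 0;
         Real.sin v * Real.sinh u, Real.cosh u - Real.cos v * Real.sinh u, 0;
         0, 0, 1] := by
  rw [NormedSpace.exp_smul_of_pow_three_eq_self (cos_smul_e1_add_sin_smul_e2_pow_three v),
    cos_smul_e1_add_sin_smul_e2_sq]
  ext i j
  fin_cases i <;> fin_cases j <;> simp [e1, e2] <;> ring
end
end

section
/- Define R(X,Y)Z = (5/2)(⟨Y,Z⟩X - ⟨X,Z⟩Y) - (3/4)(⟨JY,Z⟩JX - ⟨JX,Z⟩JY + 2⟨X,JY⟩JZ) + (9/4)(⟨Y,J_1JZ⟩J_1JX - ⟨X,J_1JZ⟩J_1JY) + (3/4)(⟨J_1JY,Z⟩X - ⟨J_1JX,Z⟩Y + ⟨Y,Z⟩J_1JX - ⟨X,Z⟩J_1JY) - 3(⟨Y,FZ⟩FX - ⟨X,FZ⟩FY) on m = span{e_1,…,e_6}. For ε ∈ {-1,1}, X = ε e_1 + e_5 and Y = JX = -ε e_2 + e_6, the vector R(X,Y)Y = -4ε e_1 + 2 e_5 does not lie in span{X, Y}. -/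
/-!
All vectors in play lie in `W = span{e₁, e₂, e₅, e₆}`, which `J`, `J₁` and `F` preserve and on
which `⟨·,·⟩` reads `-(a a' + b b')` in the coordinates `(a, b, c, d)` of `a e₁ + b e₂ + c e₅ + d e₆`
(`e₅`, `e₆` are null and orthogonal to `e₁`, `e₂`). So `R(X,Y)Y` is coefficient arithmetic, where
`ε² = 1` is used. If `a X + b Y = -4ε e₁ + 2 e₅`, the `e₅`-coordinate gives `a = 2` and then the
`e₁`-coordinate gives `2ε = -4ε`, impossible for `ε ≠ 0`.
-/

open Matrix Real

noncomputable section

/-- the curvature-tensor expression of `(SL(3,ℝ)/H, g)` -/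
def Rcurv (J J1 F : M3 →ₗ[ℝ] M3) (X Y Z : M3) : M3 :=
    (5/2 : ℝ) • (ip Y Z • X - ip X Z • Y)
  - (3/4 : ℝ) • (ip (J Y) Z • J X - ip (J X) Z • J Y + (2 : ℝ) • (ip X (J Y) • J Z))
  + (9/4 : ℝ) • (ip Y (J1 (J Z)) • J1 (J X) - ip X (J1 (J Z)) • J1 (J Y))
  + (3/4 : ℝ) • (ip (J1 (J Y)) Z • X - ip (J1 (J X)) Z • Y
      + ip Y Z • J1 (J X) - ip X Z • J1 (J Y))
  - (3 : ℝ) • (ip Y (F Z) • F X - ip X (F Z) • F Y)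

def ofCoords (a b c d : ℝ) : M3 := a • e1 + b • e2 + c • e5 + d • e6

theorem ofCoords_eq_matrix (a b c d : ℝ) :
    ofCoords a b c d = !![a, b, 0; b, -a, 0; -(c * Real.sqrt 2), -(d * Real.sqrt 2), 0] := by
  ext i j
  fin_cases i <;> fin_cases j <;> simp [ofCoords, e1, e2, e5, e6]

theorem ip_ofCoords (a b c d a' b' c' d' : ℝ) :
    ip (ofCoords a b c d) (ofCoords a' b' c' d') = -(a * a' + b * b') := by
  simp [ip, ofCoords_eq_matrix, Matrix.trace_fin_three]
  ring

theorem ofCoords_inj {a b c d a' b' c' d' : ℝ} :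
    ofCoords a b c d = ofCoords a' b' c' d' ↔ a = a' ∧ b = b' ∧ c = c' ∧ d = d' := by
  refine ⟨fun h ↦ ?_, by rintro ⟨rfl, rfl, rfl, rfl⟩; rfl⟩
  have hs : Real.sqrt 2 ≠ 0 := by positivity
  simp only [ofCoords_eq_matrix] at h
  refine ⟨?_, ?_, ?_, ?_⟩
  · simpa using congrFun (congrFun h 0) 0
  · simpa using congrFun (congrFun h 0) 1
  · simpa [hs] using congrFun (congrFun h 2) 0
  · simpa [hs] using congrFun (congrFun h 2) 1

theorem ofCoords_add (a b c d a' b' c' d' : ℝ) :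
    ofCoords a b c d + ofCoords a' b' c' d' = ofCoords (a + a') (b + b') (c + c') (d + d') := by
  simp only [ofCoords]; module

theorem ofCoords_sub (a b c d a' b' c' d' : ℝ) :
    ofCoords a b c d - ofCoords a' b' c' d' = ofCoords (a - a') (b - b') (c - c') (d - d') := by
  simp only [ofCoords]; module

theorem smul_ofCoords (r a b c d : ℝ) :
    r • ofCoords a b c d = ofCoords (r * a) (r * b) (r * c) (r * d) := by
  simp only [ofCoords]; module

theorem isJ.apply_ofCoords {J : M3 →ₗ[ℝ] M3} (hJ : isJ J) (a b c d : ℝ) :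
    J (ofCoords a b c d) = ofCoords b (-a) (-d) c := by
  obtain ⟨h1, h2, -, -, h5, h6⟩ := hJ
  simp only [ofCoords, map_add, map_smul, h1, h2, h5, h6]; module

theorem isJ1.apply_ofCoords {J1 : M3 →ₗ[ℝ] M3} (hJ1 : isJ1 J1) (a b c d : ℝ) :
    J1 (ofCoords a b c d) = ofCoords (-b) a (-d) c := by
  obtain ⟨h1, h2, -, -, h5, h6⟩ := hJ1
  simp only [ofCoords, map_add, map_smul, h1, h2, h5, h6]; module

theorem isF.apply_ofCoords {F : M3 →ₗ[ℝ] M3} (hF : isF F) (a b c d : ℝ) :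
    F (ofCoords a b c d) = ofCoords 0 0 d (-c) := by
  obtain ⟨h1, h2, -, -, h5, h6⟩ := hF
  simp only [ofCoords, map_add, map_smul, h1, h2, h5, h6]; module

theorem rcurv_ofCoords {J J1 F : M3 →ₗ[ℝ] M3} (hJ : isJ J) (hJ1 : isJ1 J1) (hF : isF F) {ε : ℝ}
    (hε : ε ^ 2 = 1) :
    Rcurv J J1 F (ofCoords ε 0 1 0) (ofCoords 0 (-ε) 0 1) (ofCoords 0 (-ε) 0 1) =
      ofCoords (-4 * ε) 0 2 0 := by
  simp only [Rcurv, hJ.apply_ofCoords, hJ1.apply_ofCoords, hF.apply_ofCoords, ip_ofCoords,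
    smul_ofCoords, ofCoords_add, ofCoords_sub]
  congr 1
  · linear_combination (-4 * ε) * hε
  · ring
  · linear_combination 2 * hε
  · ring

theorem ofCoords_notMem_span {ε : ℝ} (hε : ε ≠ 0) :
    ofCoords (-4 * ε) 0 2 0 ∉ Submodule.span ℝ {ofCoords ε 0 1 0, ofCoords 0 (-ε) 0 1} := by
  rw [Submodule.mem_span_pair]
  rintro ⟨a, b, hab⟩
  simp only [smul_ofCoords, ofCoords_add] at hab
  obtain ⟨h1, -, h5, -⟩ := ofCoords_inj.mp hab
  apply hε
  linear_combination (h1 - ε * h5) / 6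

theorem stmt19 (J J1 F : M3 →ₗ[ℝ] M3) (hJ : isJ J) (hJ1 : isJ1 J1) (hF : isF F)
    (ε : ℝ) (hε : ε = 1 ∨ ε = -1) :
    let X : M3 := ε • e1 + e5
    let Y : M3 := -(ε • e2) + e6
    Rcurv J J1 F X Y Y = (-4 * ε) • e1 + (2 : ℝ) • e5 ∧
    (-4 * ε) • e1 + (2 : ℝ) • e5 ∉ Submodule.span ℝ ({X, Y} : Set M3) := by
  intro X Y
  have hX : X = ofCoords ε 0 1 0 := by simp [X, ofCoords]
  have hY : Y = ofCoords 0 (-ε) 0 1 := by simp [Y, ofCoords]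
  have hV : (-4 * ε) • e1 + (2 : ℝ) • e5 = ofCoords (-4 * ε) 0 2 0 := by simp [ofCoords]
  have hε_sq : ε ^ 2 = 1 := by rcases hε with rfl | rfl <;> norm_num
  have hε_ne : ε ≠ 0 := by rcases hε with rfl | rfl <;> norm_num
  rw [hX, hY, hV]
  exact ⟨rcurv_ofCoords hJ hJ1 hF hε_sq, ofCoords_notMem_span hε_ne⟩
end
end
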